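/- Let h(x) = ∫₀ˣ exp(−t²) dt and define k₄(x) = (2x² − 1)·h(x) / (h(x) − x·exp(−x²)) for x > 0. Then k₄ is strictly increasing on (0, ∞). -/

import Mathlib

open Real

noncomputable def Hfun (x : ℝ) : ℝ := ∫ t in (0:ℝ)..x, Real.exp (-t ^ 2)

lemma contf : Continuous fun t : ℝ => Real.exp (-t ^ 2) :=
  Real.continuous_exp.comp (continuous_pow 2).neg

lemma hasDerivAt_H (x : ℝ) : HasDerivAt Hfun (Real.exp (-x ^ 2)) x :=
  (contf.integral_hasStrictDerivAt 0 x).hasDerivAt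

lemma hasDerivAt_E (x : ℝ) :
    HasDerivAt (fun x : ℝ => Real.exp (-x ^ 2)) (-2 * x * Real.exp (-x ^ 2)) x := by
  have h1 : HasDerivAt (fun x : ℝ => -x ^ 2) (-2 * x) x := by
    have := (hasDerivAt_pow 2 x).neg
    refine this.congr_deriv ?_
    push_cast; ring
  simpa [mul_comm] using h1.exp

lemma H_lb {x : ℝ} (hx : 0 ≤ x) :
    (x + 2 / 3 * x ^ 3) * Real.exp (-x ^ 2) ≤ Hfun x := by
  have key : ∀ t ∈ Set.Icc 0 x,
      (1 + (x ^ 2 - t ^ 2)) * Real.exp (-x ^ 2) ≤ Real.exp (-t ^ 2) := by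
    intro t _
    have h1 : x ^ 2 - t ^ 2 + 1 ≤ Real.exp (x ^ 2 - t ^ 2) := Real.add_one_le_exp _
    have h2 : Real.exp (x ^ 2 - t ^ 2) * Real.exp (-x ^ 2) = Real.exp (-t ^ 2) := by
      rw [← Real.exp_add]; ring_nf
    nlinarith [Real.exp_pos (-x ^ 2), Real.exp_pos (-t ^ 2)]
  have hint : IntervalIntegrable (fun t : ℝ => (1 + (x ^ 2 - t ^ 2)) * Real.exp (-x ^ 2))
      MeasureTheory.volume 0 x := by
    apply Continuous.intervalIntegrable
    continuity
  have hmono := intervalIntegral.integral_mono_on hx hint (contf.intervalIntegrable 0 x)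
    (fun t ht => key t ht)
  have hcalc : (∫ t in (0:ℝ)..x, (1 + (x ^ 2 - t ^ 2)) * Real.exp (-x ^ 2))
      = (x + 2 / 3 * x ^ 3) * Real.exp (-x ^ 2) := by
    rw [intervalIntegral.integral_mul_const]
    have h1 : IntervalIntegrable (fun t : ℝ => 1 + x ^ 2) MeasureTheory.volume 0 x :=
      (continuous_const).intervalIntegrable 0 x
    have h2 : IntervalIntegrable (fun t : ℝ => t ^ 2) MeasureTheory.volume 0 x :=
      (continuous_pow 2).intervalIntegrable 0 x
    have he : (fun t : ℝ => 1 + (x ^ 2 - t ^ 2)) = fun t : ℝ => (1 + x ^ 2) - t ^ 2 := by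
      funext t; ring
    rw [he, intervalIntegral.integral_sub h1 h2, intervalIntegral.integral_const,
      integral_pow, smul_eq_mul]
    ring
  rw [← hcalc]
  exact hmono

lemma H_pos {x : ℝ} (hx : 0 < x) : 0 < Hfun x := by
  have h1 := H_lb hx.le
  have h2 : 0 < (x + 2 / 3 * x ^ 3) * Real.exp (-x ^ 2) := by positivity
  linarith

lemma denom_pos {x : ℝ} (hx : 0 < x) : 0 < Hfun x - x * Real.exp (-x ^ 2) := by
  have h1 := H_lb hx.le
  have h2 : 0 < (2 / 3 * x ^ 3) * Real.exp (-x ^ 2) := by positivity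
  nlinarith

noncomputable def Pfun (x : ℝ) : ℝ :=
  4 * x * (Hfun x) ^ 2 - (4 * x ^ 4 + 1) * Hfun x * Real.exp (-x ^ 2)
    + (1 - 2 * x ^ 2) * x * Real.exp (-x ^ 2) ^ 2

lemma hasDerivAt_P (x : ℝ) :
    HasDerivAt Pfun
      (4 * (Hfun x) ^ 2 + (8 * x ^ 5 - 16 * x ^ 3 + 10 * x) * Hfun x * Real.exp (-x ^ 2)
        + (4 * x ^ 4 - 10 * x ^ 2) * Real.exp (-x ^ 2) ^ 2) x := by
  have hH := hasDerivAt_H x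
  have hE := hasDerivAt_E x
  have hE2 : HasDerivAt (fun x : ℝ => Real.exp (-x ^ 2) ^ 2)
      (2 * Real.exp (-x ^ 2) * (-2 * x * Real.exp (-x ^ 2))) x := by
    have := hE.pow 2
    refine this.congr_deriv ?_
    push_cast; ring
  have hid : HasDerivAt (fun x : ℝ => x) 1 x := hasDerivAt_id x
  have h1 : HasDerivAt (fun x : ℝ => 4 * x * (Hfun x) ^ 2)
      (4 * (Hfun x) ^ 2 + 4 * x * (2 * Hfun x * Real.exp (-x ^ 2))) x := by
    have hHsq : HasDerivAt (fun x : ℝ => (Hfun x) ^ 2) (2 * Hfun x * Real.exp (-x ^ 2)) x := by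
      have := hH.pow 2
      refine this.congr_deriv ?_
      push_cast; ring
    have := (hid.const_mul 4).mul hHsq
    refine this.congr_deriv ?_
    ring
  have h2 : HasDerivAt (fun x : ℝ => (4 * x ^ 4 + 1) * Hfun x * Real.exp (-x ^ 2))
      ((16 * x ^ 3 * Hfun x + (4 * x ^ 4 + 1) * Real.exp (-x ^ 2)) * Real.exp (-x ^ 2)
        + (4 * x ^ 4 + 1) * Hfun x * (-2 * x * Real.exp (-x ^ 2))) x := by
    have hpoly : HasDerivAt (fun x : ℝ => 4 * x ^ 4 + 1) (16 * x ^ 3) x := by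
      have := ((hasDerivAt_pow 4 x).const_mul 4).add_const 1
      refine this.congr_deriv ?_
      push_cast; ring
    exact (hpoly.mul hH).mul hE
  have h3 : HasDerivAt (fun x : ℝ => (1 - 2 * x ^ 2) * x * Real.exp (-x ^ 2) ^ 2)
      ((-4 * x * x + (1 - 2 * x ^ 2)) * Real.exp (-x ^ 2) ^ 2
        + (1 - 2 * x ^ 2) * x * (2 * Real.exp (-x ^ 2) * (-2 * x * Real.exp (-x ^ 2)))) x := by
    have hpoly : HasDerivAt (fun x : ℝ => (1 - 2 * x ^ 2) * x) (-4 * x * x + (1 - 2 * x ^ 2)) x := by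
      have hq : HasDerivAt (fun x : ℝ => 1 - 2 * x ^ 2) (-4 * x) x := by
        have := ((hasDerivAt_pow 2 x).const_mul 2).const_sub 1
        refine this.congr_deriv ?_
        push_cast; ring
      have := hq.mul hid
      refine this.congr_deriv ?_
      ring
    exact hpoly.mul hE2
  have := (h1.sub h2).add h3
  refine this.congr_deriv ?_
  ring

lemma P_pos {x : ℝ} (hx : 0 < x) : 0 < Pfun x := by
  have hmono : StrictMonoOn Pfun (Set.Ici 0) := by
    apply strictMonoOn_of_deriv_pos (convex_Ici 0)
    · exact fun y _ =>
        ((hasDerivAt_P y).differentiableAt.continuousAt.continuousWithinAt)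
    · intro y hy
      rw [interior_Ici] at hy
      rw [(hasDerivAt_P y).deriv]
      have hyp : (0:ℝ) < y := hy
      have hE : 0 < Real.exp (-y ^ 2) := Real.exp_pos _
      have hlb := H_lb hyp.le
      have hcoef : 0 < 8 * y ^ 5 - 16 * y ^ 3 + 10 * y := by
        nlinarith [mul_pos hyp (show (0:ℝ) < 4 * y ^ 4 - 8 * y ^ 2 + 5 by
          nlinarith [sq_nonneg (2 * y ^ 2 - 2)])]
      set L := (y + 2 / 3 * y ^ 3) * Real.exp (-y ^ 2) with hLdef
      have hLpos : 0 < L := by rw [hLdef]; positivity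
      have ha : 4 * L ^ 2 ≤ 4 * (Hfun y) ^ 2 := by nlinarith
      have hb : (8 * y ^ 5 - 16 * y ^ 3 + 10 * y) * L * Real.exp (-y ^ 2)
          ≤ (8 * y ^ 5 - 16 * y ^ 3 + 10 * y) * Hfun y * Real.exp (-y ^ 2) :=
        mul_le_mul_of_nonneg_right (mul_le_mul_of_nonneg_left hlb hcoef.le) hE.le
      have hQ : 0 < 4 * L ^ 2 + (8 * y ^ 5 - 16 * y ^ 3 + 10 * y) * L * Real.exp (-y ^ 2)
          + (4 * y ^ 4 - 10 * y ^ 2) * Real.exp (-y ^ 2) ^ 2 := by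
        have heq : 4 * L ^ 2 + (8 * y ^ 5 - 16 * y ^ 3 + 10 * y) * L * Real.exp (-y ^ 2)
            + (4 * y ^ 4 - 10 * y ^ 2) * Real.exp (-y ^ 2) ^ 2
            = Real.exp (-y ^ 2) ^ 2
              * (4 * y ^ 2 - 8 / 9 * y ^ 6 + 16 / 3 * y ^ 8) := by
          rw [hLdef]; ring
        rw [heq]
        have hpoly : 0 < 4 * y ^ 2 - 8 / 9 * y ^ 6 + 16 / 3 * y ^ 8 := by
          nlinarith [sq_nonneg (y ^ 4 - y ^ 2), sq_nonneg (y ^ 3 - y), pow_pos hyp 2, pow_pos hyp 4, pow_pos hyp 6, pow_pos hyp 8]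
        exact mul_pos (pow_pos hE 2) hpoly
      linarith
  have h0 : Pfun 0 = 0 := by
    simp [Pfun, Hfun]
  have := hmono (Set.self_mem_Ici) (Set.mem_Ici.2 hx.le) hx
  rwa [h0] at this

/-- With `h x = ∫₀ˣ exp(−t²) dt`, the function
`k₄ x = (2x² − 1)·h(x) / (h(x) − x·exp(−x²))` is strictly increasing on `(0, ∞)`. -/
theorem k4_strictMonoOn :
    StrictMonoOn
      (fun x : ℝ => ((2 * x ^ 2 - 1) * ∫ t in (0:ℝ)..x, Real.exp (-t ^ 2)) /
        ((∫ t in (0:ℝ)..x, Real.exp (-t ^ 2)) - x * Real.exp (-x ^ 2)))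
      (Set.Ioi 0) := by
  have key : ∀ x : ℝ, 0 < x → HasDerivAt
      (fun x : ℝ => ((2 * x ^ 2 - 1) * Hfun x) / (Hfun x - x * Real.exp (-x ^ 2)))
      (Pfun x / (Hfun x - x * Real.exp (-x ^ 2)) ^ 2) x := by
    intro x hx
    have hH := hasDerivAt_H x
    have hE := hasDerivAt_E x
    have hid : HasDerivAt (fun x : ℝ => x) 1 x := hasDerivAt_id x
    have hnum : HasDerivAt (fun x : ℝ => (2 * x ^ 2 - 1) * Hfun x)
        (4 * x * Hfun x + (2 * x ^ 2 - 1) * Real.exp (-x ^ 2)) x := by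
      have hpoly : HasDerivAt (fun x : ℝ => 2 * x ^ 2 - 1) (4 * x) x := by
        have := ((hasDerivAt_pow 2 x).const_mul 2).sub_const 1
        refine this.congr_deriv ?_
        push_cast; ring
      exact hpoly.mul hH
    have hden : HasDerivAt (fun x : ℝ => Hfun x - x * Real.exp (-x ^ 2))
        (2 * x ^ 2 * Real.exp (-x ^ 2)) x := by
      have := hH.sub (hid.mul hE)
      refine this.congr_deriv ?_
      ring
    have hne : Hfun x - x * Real.exp (-x ^ 2) ≠ 0 := (denom_pos hx).ne'
    have := hnum.div hden hne
    refine this.congr_deriv ?_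
    rw [Pfun]
    field_simp
    ring
  apply strictMonoOn_of_deriv_pos (convex_Ioi 0)
  · intro y hy
    have hy' : (0:ℝ) < y := hy
    exact ((key y hy').differentiableAt.continuousAt.continuousWithinAt)
  · intro y hy
    rw [interior_Ioi] at hy
    have hy' : (0:ℝ) < y := hy
    rw [show (fun x : ℝ => ((2 * x ^ 2 - 1) * ∫ t in (0:ℝ)..x, Real.exp (-t ^ 2)) /
        ((∫ t in (0:ℝ)..x, Real.exp (-t ^ 2)) - x * Real.exp (-x ^ 2)))
      = (fun x : ℝ => ((2 * x ^ 2 - 1) * Hfun x) / (Hfun x - x * Real.exp (-x ^ 2))) from rfl,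
      (key y hy').deriv]
    exact div_pos (P_pos hy') (pow_pos (denom_pos hy') 2)
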